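/- arXiv:2404.01136 — 5 statements merged into one kernel-verified Lean document; each statement's English description precedes it below -/
import Mathlib

section
/- The APP decoder message map at a GC node satisfies the GC node symmetry condition: if (b₁,…,b_K) ∈ {±1}^K is a codeword of the linear subcode C (in bipolar form), then for all message vectors, Ψ_{Gi}(b₁m₁,…,b_{i-1}m_{i-1}, b_{i+1}m_{i+1},…, b_K m_K) = b_i · Ψ_{Gi}(m₁,…,m_{i-1},m_{i+1},…,m_K), where the conditional densities of the messages satisfy the channel symmetry p(m|x=1) = p(-m|x=-1). -/
open Finset

/-- GC node symmetry of the APP decoder: if `(b₁,…,b_K)` is a (bipolar) codeword of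
the linear subcode `C`, then
`Ψ_{Gi}(b₁m₁,…,b_{i-1}m_{i-1},b_{i+1}m_{i+1},…,b_Km_K) = b_i · Ψ_{Gi}(m₁,…,m_{i-1},m_{i+1},…,m_K)`,
where `Ψ_{Gi}(m_{~i}) = log (Σ_{c∈C, c_i=1} Π_{j≠i} p(m_j|c_j)) / (Σ_{c∈C, c_i=-1} Π_{j≠i} p(m_j|c_j))`
and the message densities satisfy the channel symmetry `p(m|1) = p(-m|-1)`.
Bipolar linearity of `C` is expressed by: every codeword has entries `±1` and `C` is
closed under componentwise multiplication. -/
theorem app_gc_node_symmetry (K : ℕ) (C : Finset (Fin K → ℝ)) (p : ℝ → ℝ → ℝ)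
    (hchan : ∀ m : ℝ, p m 1 = p (-m) (-1))
    (hval : ∀ c ∈ C, ∀ j, c j = 1 ∨ c j = -1)
    (hmul : ∀ b ∈ C, ∀ c ∈ C, (fun j => b j * c j) ∈ C)
    (i : Fin K) (b : Fin K → ℝ) (hb : b ∈ C) (m : Fin K → ℝ) :
    Real.log
        ((∑ c ∈ C.filter (fun c => c i = 1),
            ∏ j ∈ Finset.univ.erase i, p (b j * m j) (c j)) /
          (∑ c ∈ C.filter (fun c => c i = -1),
            ∏ j ∈ Finset.univ.erase i, p (b j * m j) (c j))) =
      b i *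
        Real.log
          ((∑ c ∈ C.filter (fun c => c i = 1),
              ∏ j ∈ Finset.univ.erase i, p (m j) (c j)) /
            (∑ c ∈ C.filter (fun c => c i = -1),
              ∏ j ∈ Finset.univ.erase i, p (m j) (c j))) := by
  have hbb : ∀ j, b j * b j = 1 := fun j => by
    rcases hval b hb j with h | h <;> rw [h] <;> ring
  have hp : ∀ (m x y : ℝ), (x = 1 ∨ x = -1) → (y = 1 ∨ y = -1) →
      p (x * m) y = p m (x * y) := by
    intro m x y hx hy
    rcases hx with h | h <;> rcases hy with h' | h' <;> subst h <;> subst h'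
    · simp
    · simp
    · have h1 : p (-m) 1 = p m (-1) := by simpa using (hchan (-m))
      simpa using h1
    · have h2 : p (-m) (-1) = p m 1 := (hchan m).symm
      simpa using h2
  have key : ∀ s : ℝ,
      (∑ c ∈ C.filter (fun c => c i = s),
        ∏ j ∈ Finset.univ.erase i, p (b j * m j) (c j)) =
      ∑ c ∈ C.filter (fun c => c i = b i * s),
        ∏ j ∈ Finset.univ.erase i, p (m j) (c j) := by
    intro s
    refine Finset.sum_nbij' (fun c => fun j => b j * c j) (fun c => fun j => b j * c j)
      ?_ ?_ ?_ ?_ ?_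
    · intro c hc
      rw [Finset.mem_filter] at hc ⊢
      exact ⟨hmul b hb c hc.1, show b i * c i = b i * s by rw [hc.2]⟩
    · intro c hc
      rw [Finset.mem_filter] at hc ⊢
      refine ⟨hmul b hb c hc.1, ?_⟩
      show b i * c i = s
      rw [hc.2, ← mul_assoc, hbb i, one_mul]
    · intro c _
      funext j
      show b j * (b j * c j) = c j
      rw [← mul_assoc, hbb j, one_mul]
    · intro c _
      funext j
      show b j * (b j * c j) = c j
      rw [← mul_assoc, hbb j, one_mul]
    · intro c hc
      rw [Finset.mem_filter] at hc
      refine Finset.prod_congr rfl fun j _ => ?_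
      exact hp (m j) (b j) (c j) (hval b hb j) (hval c hc.1 j)
  rcases hval b hb i with hbi | hbi
  · rw [key 1, key (-1), hbi, one_mul]
    norm_num
  · rw [key 1, key (-1), hbi]
    norm_num
    rw [← Real.log_inv, inv_div]
end

section
/- If the channel, variable node maps, SPC node maps, and GC node maps all satisfy their respective symmetry conditions, then for every codeword x ∈ {±1}^n and channel realization z, every message passed in iteration l of the message-passing decoder when y = x·z is received equals the product of the corresponding component of x and the corresponding message when z is received; consequently the probability of decoding error is independent of the transmitted codeword. -/
/-- Conditional independence of the error probability under the extended symmetry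
conditions.  `Fin n` are the variable nodes, `Cn` the constraint (SPC and GC) nodes,
`Code` the set of (bipolar ±1) codewords.  `Ψ0` is the initial message map, `ΨV i c`
the variable-node map of variable `i` towards constraint `c` (taking the received
channel value and the incoming constraint-to-variable messages), `ΨC c i` the
constraint-node map of constraint `c` towards variable `i` (taking the incoming
variable-to-constraint messages), and `D i` the final decision map at variable `i`.
`M w l i c` is the variable-to-constraint message in iteration `l` when `w` was
received, defined by the message-passing recursion (hypotheses `hM0`, `hMs`).

If the variable-node maps are sign-inversion invariant and signs of local codewords
factor out of the constraint-node maps (SPC and GC node symmetry), then for every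
codeword `x` and channel realization `z`, each message computed from `y = x·z`
equals the product of the corresponding component of `x` with the message computed
from `z`; consequently the set of incorrectly decided bits — hence the error
probability — does not depend on the transmitted codeword `x`. -/
theorem gldpc_error_probability_codeword_independent
    (n : ℕ) (Cn : Type*) (Code : Set (Fin n → ℝ))
    (Ψ0 : ℝ → ℝ)
    (ΨV : Fin n → Cn → ℝ → (Cn → ℝ) → ℝ)
    (ΨC : Cn → Fin n → (Fin n → ℝ) → ℝ)
    (D : Fin n → ℝ → (Cn → ℝ) → ℝ)
    (M : (Fin n → ℝ) → ℕ → Fin n → Cn → ℝ)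
    -- message-passing recursion defining the decoder
    (hM0 : ∀ w i c, M w 0 i c = Ψ0 (w i))
    (hMs : ∀ w l i c,
      M w (l + 1) i c =
        ΨV i c (w i) (fun a => ΨC a i (fun j => M w l j a)))
    -- variable node symmetry (including the initial message map)
    (hΨ0 : ∀ m, Ψ0 (-m) = -Ψ0 m)
    (hΨV : ∀ i c m₀ (g : Cn → ℝ),
      ΨV i c (-m₀) (fun a => -(g a)) = -(ΨV i c m₀ g))
    (hD : ∀ i m₀ (g : Cn → ℝ), D i (-m₀) (fun a => -(g a)) = -(D i m₀ g))
    -- SPC/GC node symmetry: signs of codewords factor out of constraint maps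
    (hΨC : ∀ c i (b : Fin n → ℝ), b ∈ Code → ∀ m : Fin n → ℝ,
      ΨC c i (fun j => b j * m j) = b i * ΨC c i m)
    -- the transmitted codeword and the channel realization
    (x : Fin n → ℝ) (hx : x ∈ Code) (hxpm : ∀ i, x i = 1 ∨ x i = -1)
    (z : Fin n → ℝ) :
    (∀ l i c, M (fun j => x j * z j) l i c = x i * M z l i c) ∧
      ∀ l : ℕ,
        {i : Fin n |
            x i *
              D i (x i * z i)
                (fun a => ΨC a i (fun j => M (fun j' => x j' * z j') l j a)) ≤ 0} =
          {i : Fin n | D i (z i) (fun a => ΨC a i (fun j => M z l j a)) ≤ 0} := by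

  have key : ∀ l i c, M (fun j => x j * z j) l i c = x i * M z l i c := by
    intro l
    induction l with
    | zero =>
      intro i c
      rw [hM0, hM0]
      rcases hxpm i with h | h
      · rw [h]; ring_nf
      · rw [h]; simp [hΨ0]
    | succ l ih =>
      intro i c
      rw [hMs, hMs]
      have hg : (fun a => ΨC a i (fun j => M (fun j' => x j' * z j') l j a))
          = fun a => x i * ΨC a i (fun j => M z l j a) := by
        funext a
        have : (fun j => M (fun j' => x j' * z j') l j a)
            = fun j => x j * M z l j a := by
          funext j; exact ih j a
        rw [this, hΨC a i x hx]
      rw [hg]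
      rcases hxpm i with h | h
      · rw [h]; simp
      · rw [h]
        have := hΨV i c (z i) (fun a => ΨC a i (fun j => M z l j a))
        simpa using this
  refine ⟨key, fun l => ?_⟩
  ext i
  simp only [Set.mem_setOf_eq]
  have hg : (fun a => ΨC a i (fun j => M (fun j' => x j' * z j') l j a))
      = fun a => x i * ΨC a i (fun j => M z l j a) := by
    funext a
    have : (fun j => M (fun j' => x j' * z j') l j a)
        = fun j => x j * M z l j a := by
      funext j; exact key l j a
    rw [this, hΨC a i x hx]
  rw [hg]
  rcases hxpm i with h | h
  · rw [h]; simp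
  · rw [h]
    have := hD i (z i) (fun a => ΨC a i (fun j => M z l j a))
    simp only [neg_mul, one_mul] at this ⊢
    rw [this]
    constructor <;> intro h' <;> linarith
end

section
/- For the (6,3) shortened Hamming code used as a GC subcode on the BEC: if each of the 5 incoming messages is independently erased with probability ε, then the probability that the APP-decoded outgoing message to the remaining coordinate is erased equals 1 - 2ε³(1-ε)² - 8ε²(1-ε)³ - 5ε(1-ε)⁴ - (1-ε)⁵, and this expression is a nondecreasing function of ε on [0,1] taking values in [0,1]. -/
open Matrix Finset
open scoped Classical

/-- The parity-check matrix of the (6,3) shortened Hamming code. -/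
def H₁ : Matrix (Fin 3) (Fin 6) (ZMod 2) :=
  !![1,0,0,1,1,0; 0,1,0,1,0,1; 0,0,1,0,1,1]

/-- Coordinate `i` is determined by the set `S` of known (non-erased) coordinates
under the code constraints: any two codewords that agree on `S` agree at `i`. -/
def determined₁ (S : Finset (Fin 6)) (i : Fin 6) : Prop :=
  ∀ c c' : Fin 6 → ZMod 2, H₁.mulVec c = 0 → H₁.mulVec c' = 0 →
    (∀ j ∈ S, c j = c' j) → c i = c' i

set_option synthInstance.maxHeartbeats 1000000 in
set_option synthInstance.maxSize 2048 in
set_option maxHeartbeats 4000000 in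
set_option maxRecDepth 8000 in
theorem det_iff : ∀ S : Finset (Fin 6), determined₁ S 0 ↔
    ((0:Fin 6) ∈ S ∨ (1 ∈ S ∨ 3 ∈ S) ∧ (2 ∈ S ∨ 3 ∈ S ∨ 5 ∈ S) ∧ (2 ∈ S ∨ 4 ∈ S) ∧
      (1 ∈ S ∨ 4 ∈ S ∨ 5 ∈ S)) := by
  unfold determined₁
  decide

theorem sum_powerset_expand (f : Finset (Fin 6) → ℝ) :
    ∑ S ∈ (({1,2,3,4,5} : Finset (Fin 6))).powerset, f S =
      f {} + f {1} + f {2} + f {3} + f {4} + f {5} + f {1,2} + f {1,3} + f {1,4} + f {1,5}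
      + f {2,3} + f {2,4} + f {2,5} + f {3,4} + f {3,5} + f {4,5}
      + f {1,2,3} + f {1,2,4} + f {1,2,5} + f {1,3,4} + f {1,3,5} + f {1,4,5}
      + f {2,3,4} + f {2,3,5} + f {2,4,5} + f {3,4,5}
      + f {1,2,3,4} + f {1,2,3,5} + f {1,2,4,5} + f {1,3,4,5} + f {2,3,4,5}
      + f {1,2,3,4,5} := by
  have h5 : ({5} : Finset (Fin 6)).powerset = {∅, {5}} := by decide
  simp [Finset.sum_powerset_insert, Finset.mem_insert, h5,
    Finset.sum_pair (show (∅ : Finset (Fin 6)) ≠ {5} by decide)]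
  ring

theorem hasDeriv_e (x : ℝ) :
    HasDerivAt (fun ε : ℝ =>
      1 - 2*ε^3*(1-ε)^2 - 8*ε^2*(1-ε)^3 - 5*ε*(1-ε)^4 - (1-ε)^5)
      (4*x + 6*x^2 - 20*x^3 + 10*x^4) x := by
  have hfun : (fun ε : ℝ =>
      1 - 2*ε^3*(1-ε)^2 - 8*ε^2*(1-ε)^3 - 5*ε*(1-ε)^4 - (1-ε)^5)
      = fun ε : ℝ => ((2*ε^2 + 2*ε^3) + ((-5)*ε^4 + 2*ε^5)) := by
    funext ε; ring
  rw [hfun]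
  have h := (((hasDerivAt_pow 2 x).const_mul (2:ℝ)).add
      ((hasDerivAt_pow 3 x).const_mul (2:ℝ))).add
    (((hasDerivAt_pow 4 x).const_mul (-5:ℝ)).add
      ((hasDerivAt_pow 5 x).const_mul (2:ℝ)))
  exact h.congr_deriv (by push_cast; ring)

theorem mono_e : MonotoneOn (fun ε : ℝ =>
    1 - 2*ε^3*(1-ε)^2 - 8*ε^2*(1-ε)^3 - 5*ε*(1-ε)^4 - (1-ε)^5)
    (Set.Icc (0:ℝ) 1) := by
  apply monotoneOn_of_deriv_nonneg (convex_Icc 0 1)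
  · exact Continuous.continuousOn (by continuity)
  · intro x _
    exact (hasDeriv_e x).differentiableAt.differentiableWithinAt
  · intro x hx
    rw [interior_Icc] at hx
    rw [(hasDeriv_e x).deriv]
    have h1 : (0:ℝ) ≤ x := hx.1.le
    have h2 : x ≤ 1 := hx.2.le
    have key : 4*x + 6*x^2 - 20*x^3 + 10*x^4 = 2*x*(1-x)*(2+5*x-5*x^2) := by ring
    rw [key]
    have h3 : (0:ℝ) ≤ 2+5*x-5*x^2 := by nlinarith [mul_nonneg h1 (sub_nonneg.2 h2)]
    have h4 : (0:ℝ) ≤ 2*x*(1-x) := by nlinarith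
    exact mul_nonneg h4 h3

/-- For the (6,3) shortened Hamming code as a GC subcode on the BEC: if each of the
5 incoming messages is independently erased with probability `ε`, the probability
that the APP-decoded outgoing message to the remaining coordinate (coordinate `1`,
index `0`) is erased equals
`e(ε) = 1 - 2ε³(1-ε)² - 8ε²(1-ε)³ - 5ε(1-ε)⁴ - (1-ε)⁵`; moreover this expression
is nondecreasing on `[0,1]` and takes values in `[0,1]`. -/
theorem gc_erasure_prob_shortened_hamming_6_3 :
    (∀ ε : ℝ, ε ∈ Set.Icc (0:ℝ) 1 →
      (∑ S ∈ (Finset.univ.erase (0 : Fin 6)).powerset,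
          (if determined₁ S 0 then 0 else ε ^ (5 - S.card) * (1 - ε) ^ S.card)) =
        1 - 2*ε^3*(1-ε)^2 - 8*ε^2*(1-ε)^3 - 5*ε*(1-ε)^4 - (1-ε)^5) ∧
    MonotoneOn (fun ε : ℝ =>
        1 - 2*ε^3*(1-ε)^2 - 8*ε^2*(1-ε)^3 - 5*ε*(1-ε)^4 - (1-ε)^5)
      (Set.Icc (0:ℝ) 1) ∧
    ∀ ε : ℝ, ε ∈ Set.Icc (0:ℝ) 1 →
      (1 - 2*ε^3*(1-ε)^2 - 8*ε^2*(1-ε)^3 - 5*ε*(1-ε)^4 - (1-ε)^5) ∈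
        Set.Icc (0:ℝ) 1 := by
  refine ⟨?_, mono_e, ?_⟩
  · intro ε _
    have he : (Finset.univ.erase (0 : Fin 6)) = ({1,2,3,4,5} : Finset (Fin 6)) := by decide
    rw [he, sum_powerset_expand]
    simp only [det_iff]
    norm_num [Finset.mem_insert, Finset.mem_singleton,
      Finset.card_insert_of_notMem, Finset.card_singleton]
    simp (config := { decide := true }) only [Finset.card_insert_of_notMem,
      Finset.mem_insert, Finset.mem_singleton, Finset.card_singleton, if_true, if_false]
    norm_num
    ring
  · intro ε hε
    constructor
    · have h0 : (1:ℝ) - 2*(0:ℝ)^3*(1-0)^2 - 8*(0:ℝ)^2*(1-0)^3 - 5*0*(1-0)^4 - (1-0)^5 = 0 := by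
        norm_num
      have := mono_e (Set.left_mem_Icc.2 zero_le_one) hε hε.1
      simpa [h0] using this
    · have h1 : (1:ℝ) - 2*(1:ℝ)^3*(1-1)^2 - 8*(1:ℝ)^2*(1-1)^3 - 5*1*(1-1)^4 - (1-1)^5 = 1 := by
        norm_num
      have := mono_e hε (Set.right_mem_Icc.2 zero_le_one) hε.2
      simpa [h1] using this
end

section
/- For the (7,4) Hamming code used as a GC subcode on the BEC: the erasure probability of the outgoing APP message, given each of the 6 incoming messages is independently erased with probability ε, is e(ε) = 1 - 4ε³(1-ε)³ - 12ε²(1-ε)⁴ - 6ε(1-ε)⁵ - (1-ε)⁶; moreover e(0) = 0, e(1) = 1, and e is monotone nondecreasing on [0,1]. -/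
open Matrix Finset
open scoped Classical

/-- The parity-check matrix of the (7,4) Hamming code. -/
def H₂ : Matrix (Fin 3) (Fin 7) (ZMod 2) :=
  !![0,1,1,1,1,0,0; 1,0,1,1,0,1,0; 1,1,0,1,0,0,1]

/-- Coordinate `i` is determined by the set `S` of known (non-erased) coordinates
under the code constraints: any two codewords that agree on `S` agree at `i`. -/
def determined₂ (S : Finset (Fin 7)) (i : Fin 7) : Prop :=
  ∀ c c' : Fin 7 → ZMod 2, H₂.mulVec c = 0 → H₂.mulVec c' = 0 →
    (∀ j ∈ S, c j = c' j) → c i = c' i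

/-- Homogeneous version of `determined₂`. -/
def D2 (S : Finset (Fin 7)) : Prop :=
  ∀ c : Fin 7 → ZMod 2, H₂.mulVec c = 0 → (∀ j ∈ S, c j = 0) → c 0 = 0

instance : DecidablePred D2 := fun S => by unfold D2; infer_instance

lemma determ_iff (S : Finset (Fin 7)) : determined₂ S 0 ↔ D2 S := by
  constructor
  · intro h c hc hcS
    simpa using h c 0 hc (by simp [Matrix.mulVec_zero]) (fun j hj => by simpa using hcS j hj)
  · intro h c c' hc hc' hag
    have := h (c - c') (by rw [Matrix.mulVec_sub, hc, hc', sub_zero])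
      (fun j hj => by simp [hag j hj])
    simpa [sub_eq_zero] using this

/-- Explicit combinatorial characterization of determinedness for the Hamming code. -/
def good (S : Finset (Fin 7)) : Prop :=
  ({2,3,5} : Finset (Fin 7)) ⊆ S ∨ ({1,3,6} : Finset (Fin 7)) ⊆ S ∨
  ({1,4,5} : Finset (Fin 7)) ⊆ S ∨ ({2,4,6} : Finset (Fin 7)) ⊆ S

instance : DecidablePred good := fun S => by unfold good; infer_instance

set_option maxRecDepth 1000000 in
lemma D2_iff_good : ∀ S : Finset (Fin 7), (0 : Fin 7) ∉ S → (D2 S ↔ good S) := by decide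

def gg (S : Finset (Fin 7)) : ℕ := if good S then 7 else S.card

/-- For the (7,4) Hamming code as a GC subcode on the BEC: with each of the 6
incoming messages independently erased with probability `ε`, the erasure
probability of the outgoing APP message to the remaining coordinate (coordinate
`1`, index `0`) is
`e(ε) = 1 - 4ε³(1-ε)³ - 12ε²(1-ε)⁴ - 6ε(1-ε)⁵ - (1-ε)⁶`;
moreover `e(0) = 0`, `e(1) = 1`, and `e` is monotone nondecreasing on `[0,1]`. -/
theorem gc_erasure_prob_hamming_7_4 :
    (∀ ε : ℝ, ε ∈ Set.Icc (0:ℝ) 1 →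
      (∑ S ∈ (Finset.univ.erase (0 : Fin 7)).powerset,
          (if determined₂ S 0 then 0 else ε ^ (6 - S.card) * (1 - ε) ^ S.card)) =
        1 - 4*ε^3*(1-ε)^3 - 12*ε^2*(1-ε)^4 - 6*ε*(1-ε)^5 - (1-ε)^6) ∧
    (1 - 4*(0:ℝ)^3*(1-0)^3 - 12*0^2*(1-0)^4 - 6*0*(1-0)^5 - (1-0)^6 = 0) ∧
    (1 - 4*(1:ℝ)^3*(1-1)^3 - 12*1^2*(1-1)^4 - 6*1*(1-1)^5 - (1-1)^6 = 1) ∧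
    MonotoneOn (fun ε : ℝ =>
        1 - 4*ε^3*(1-ε)^3 - 12*ε^2*(1-ε)^4 - 6*ε*(1-ε)^5 - (1-ε)^6)
      (Set.Icc (0:ℝ) 1) := by
  refine ⟨?_, by norm_num, by norm_num, ?_⟩
  · intro ε _
    set P := (Finset.univ.erase (0 : Fin 7)).powerset with hP
    have step1 : (∑ S ∈ P, (if determined₂ S 0 then 0 else ε ^ (6 - S.card) * (1 - ε) ^ S.card))
        = ∑ S ∈ P, (fun k : ℕ => if k = 7 then (0:ℝ) else ε ^ (6 - k) * (1 - ε) ^ k) (gg S) := by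
      refine Finset.sum_congr rfl fun S hS => ?_
      have h1 : S ⊆ Finset.univ.erase (0 : Fin 7) := Finset.mem_powerset.mp hS
      have h0 : (0 : Fin 7) ∉ S := fun h => (Finset.mem_erase.mp (h1 h)).1 rfl
      have hiff : determined₂ S 0 ↔ good S := (determ_iff S).trans (D2_iff_good S h0)
      have hcard : S.card ≤ 6 := by simpa using Finset.card_le_card h1
      by_cases hD : good S
      · rw [if_pos (hiff.mpr hD)]
        simp [gg, hD]
      · rw [if_neg (fun h => hD (hiff.mp h))]
        have : S.card ≠ 7 := by omega
        simp [gg, hD, this]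
    rw [step1,
      Finset.sum_comp (fun k : ℕ => if k = 7 then (0:ℝ) else ε ^ (6 - k) * (1 - ε) ^ k) gg]
    have himg : P.image gg = ({7,0,1,2,3,4} : Finset ℕ) := by decide
    rw [himg]
    have h7 : #{a ∈ P | gg a = 7} = 23 := by decide
    have h0 : #{a ∈ P | gg a = 0} = 1 := by decide
    have h1 : #{a ∈ P | gg a = 1} = 6 := by decide
    have h2 : #{a ∈ P | gg a = 2} = 15 := by decide
    have h3 : #{a ∈ P | gg a = 3} = 16 := by decide
    have h4 : #{a ∈ P | gg a = 4} = 3 := by decide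
    rw [Finset.sum_insert (by decide), Finset.sum_insert (by decide),
      Finset.sum_insert (by decide), Finset.sum_insert (by decide),
      Finset.sum_insert (by decide), Finset.sum_singleton, h7, h0, h1, h2, h3, h4]
    norm_num
    ring
  · have hfg : (fun ε : ℝ =>
        1 - 4*ε^3*(1-ε)^3 - 12*ε^2*(1-ε)^4 - 6*ε*(1-ε)^5 - (1-ε)^6)
        = (fun ε : ℝ => 3*ε^2 + 4*ε^3 - 15*ε^4 + 12*ε^5 - 3*ε^6) := by
      funext x; ring
    rw [hfg]
    have hder : ∀ x : ℝ, HasDerivAt (fun ε : ℝ => 3*ε^2 + 4*ε^3 - 15*ε^4 + 12*ε^5 - 3*ε^6)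
        (6*x + 12*x^2 - 60*x^3 + 60*x^4 - 18*x^5) x := by
      intro x
      have h : HasDerivAt (fun ε : ℝ => 3*ε^2 + 4*ε^3 - 15*ε^4 + 12*ε^5 - 3*ε^6)
          (3*(↑2*x^1) + 4*(↑3*x^2) - 15*(↑4*x^3) + 12*(↑5*x^4) - 3*(↑6*x^5)) x :=
        (((((hasDerivAt_pow 2 x).const_mul (3:ℝ)).add
          ((hasDerivAt_pow 3 x).const_mul (4:ℝ))).sub
          ((hasDerivAt_pow 4 x).const_mul (15:ℝ))).add
          ((hasDerivAt_pow 5 x).const_mul (12:ℝ))).sub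
          ((hasDerivAt_pow 6 x).const_mul (3:ℝ))
      convert h using 1
      push_cast
      ring
    refine monotoneOn_of_deriv_nonneg (convex_Icc 0 1)
      (Continuous.continuousOn (by continuity))
      (fun x _ => (hder x).differentiableAt.differentiableWithinAt) ?_
    intro x hx
    rw [interior_Icc] at hx
    obtain ⟨hx0, hx1⟩ := hx
    rw [(hder x).deriv]
    have key : 6*x + 12*x^2 - 60*x^3 + 60*x^4 - 18*x^5
        = 6*x * ((1-x)^2 * (1 + 4*x - 3*x^2)) := by ring
    rw [key]
    have h1 : (0:ℝ) ≤ 1 + 4*x - 3*x^2 := by nlinarith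
    have h2 : (0:ℝ) ≤ (1-x)^2 := sq_nonneg _
    have h3 : (0:ℝ) ≤ 6*x := by linarith
    exact mul_nonneg h3 (mul_nonneg h2 h1)
end

section
/- The function φ defined by φ(x) = 1 - (1/√(4πx)) ∫_ℝ tanh(u/2) e^{-(u-x)²/(4x)} du for x > 0 and φ(0) = 1 takes values in (0,1] for x ≥ 0 and is strictly decreasing on (0,∞). -/
open Real

/-- The Gaussian-approximation function of density evolution:
`φ(x) = 1 - (1/√(4πx)) ∫ tanh(u/2) e^{-(u-x)²/(4x)} du` for `x > 0`, `φ(0) = 1`. -/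
noncomputable def phiGA (x : ℝ) : ℝ :=
  if x = 0 then 1
  else 1 - (1 / Real.sqrt (4 * π * x)) *
      ∫ u : ℝ, Real.tanh (u / 2) * Real.exp (-(u - x) ^ 2 / (4 * x))

open MeasureTheory Set Filter Metric

set_option maxHeartbeats 1000000



lemma myHasDerivAt_tanh (y : ℝ) : HasDerivAt Real.tanh (1 / Real.cosh y ^ 2) y := by
  have h := (Real.hasDerivAt_sinh y).div (Real.hasDerivAt_cosh y) (Real.cosh_pos y).ne'
  have he : Real.tanh = fun t => Real.sinh t / Real.cosh t :=
    funext fun t => Real.tanh_eq_sinh_div_cosh t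
  rw [he]
  refine h.congr_deriv (Eq.symm ?_)
  rw [← Real.cosh_sq_sub_sinh_sq y]
  ring

lemma my_tanh_lt_one (y : ℝ) : Real.tanh y < 1 := by
  rw [Real.tanh_eq_sinh_div_cosh, div_lt_one (Real.cosh_pos y)]
  nlinarith [Real.cosh_sub_sinh y, Real.exp_pos (-y)]

lemma my_tanh_strictMono : StrictMono Real.tanh := by
  apply strictMono_of_deriv_pos
  intro y
  rw [(myHasDerivAt_tanh y).deriv]
  positivity

lemma integrable_gauss : Integrable (fun z : ℝ => Real.exp (-z ^ 2 / 2)) := by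
  have h := integrable_exp_neg_mul_sq (by norm_num : (0:ℝ) < 1/2)
  refine h.congr (Filter.Eventually.of_forall fun z => ?_)
  ring_nf

lemma integral_gauss : ∫ z : ℝ, Real.exp (-z ^ 2 / 2) = Real.sqrt (2 * π) := by
  have h := integral_gaussian (1/2 : ℝ)
  have e1 : ∀ z : ℝ, Real.exp (-(1/2) * z ^ 2) = Real.exp (-z ^ 2 / 2) := fun z => by ring_nf
  rw [show (π / (1/2 : ℝ)) = 2 * π by ring] at h
  rw [← h]
  exact integral_congr_ae (Filter.Eventually.of_forall fun z => (e1 z).symm)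

lemma integrable_abs_mul_gauss : Integrable (fun z : ℝ => |z| * Real.exp (-z ^ 2 / 2)) := by
  have h4 : Integrable (fun z : ℝ => Real.exp (-z ^ 2 / 4)) := by
    have h := integrable_exp_neg_mul_sq (by norm_num : (0:ℝ) < 1/4)
    refine h.congr (Filter.Eventually.of_forall fun z => ?_)
    ring_nf
  refine (h4.bdd_mul (f := fun z : ℝ => |z| * Real.exp (-z ^ 2 / 4)) (c := 2) ?_ (Filter.Eventually.of_forall fun z => ?_)).congr (Filter.Eventually.of_forall fun z => ?_)
  · exact (continuous_abs.mul (by continuity)).aestronglyMeasurable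
  · -- ‖ |z| * exp (-z^2/4) ‖ ≤ 2
    rw [Real.norm_eq_abs, abs_of_nonneg (by positivity)]
    rcases le_or_gt (|z|) 2 with hz | hz
    · calc |z| * Real.exp (-z ^ 2 / 4) ≤ 2 * 1 := by
            apply mul_le_mul hz ?_ (by positivity) (by norm_num)
            exact Real.exp_le_one_iff.mpr (by nlinarith [sq_nonneg z])
        _ = 2 := by ring
    · have hzne : z ≠ 0 := fun h => by simp [h] at hz; linarith
      have h1 : Real.exp (-z ^ 2 / 4) ≤ 4 / z ^ 2 := by
        have h3 : Real.exp (-z ^ 2 / 4) = (Real.exp (z ^ 2 / 4))⁻¹ := by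
          rw [← Real.exp_neg]
          ring_nf
        rw [h3, inv_le_comm₀ (Real.exp_pos _) (by positivity), inv_div]
        have := Real.add_one_le_exp (z ^ 2 / 4)
        linarith
      have hz0 : (0:ℝ) < |z| := by linarith
      have h2 : |z| * (4 / z ^ 2) ≤ 2 := by
        rw [mul_div_assoc', div_le_iff₀ (by positivity : (0:ℝ) < z ^ 2)]
        nlinarith [sq_abs z]
      calc |z| * Real.exp (-z ^ 2 / 4) ≤ |z| * (4 / z ^ 2) :=
            mul_le_mul_of_nonneg_left h1 (abs_nonneg z)
        _ ≤ 2 := h2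
  · -- |z| * exp(-z^2/4) * exp(-z^2/4) = |z| * exp(-z^2/2)
    show |z| * Real.exp (-z ^ 2 / 4) * Real.exp (-z ^ 2 / 4) = |z| * Real.exp (-z ^ 2 / 2)
    rw [mul_assoc, ← Real.exp_add]
    ring_nf

lemma integrable_bdd_gauss {g : ℝ → ℝ} (hg : Continuous g) {C : ℝ} (hC : ∀ z, |g z| ≤ C) :
    Integrable (fun z => g z * Real.exp (-z ^ 2 / 2)) :=
  integrable_gauss.bdd_mul (c := C) hg.aestronglyMeasurable (Filter.Eventually.of_forall fun z => by simpa using hC z)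



/-- The integral in the standard-Gaussian form. -/
noncomputable def Jga (x : ℝ) : ℝ :=
  ∫ z : ℝ, Real.tanh ((x + Real.sqrt (2 * x) * z) / 2) * Real.exp (-z ^ 2 / 2)

lemma phiGA_eq {x : ℝ} (hx : 0 < x) :
    phiGA x = 1 - (Real.sqrt (2 * π))⁻¹ * Jga x := by
  have hs : (0:ℝ) < Real.sqrt (2 * x) := Real.sqrt_pos.mpr (by linarith)
  set s := Real.sqrt (2 * x) with hsdef
  have hs2 : s ^ 2 = 2 * x := Real.sq_sqrt (by linarith)
  rw [phiGA, if_neg hx.ne']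
  set G : ℝ → ℝ := fun u => Real.tanh (u / 2) * Real.exp (-(u - x) ^ 2 / (4 * x)) with hG
  have h1 : (∫ z : ℝ, G (s * z + x)) = |s⁻¹| • ∫ u, G u := by
    have := MeasureTheory.Measure.integral_comp_mul_left (fun t => G (t + x)) s
    simpa [MeasureTheory.integral_add_right_eq_self] using this
  have h2 : ∀ z : ℝ, G (s * z + x)
      = Real.tanh ((x + s * z) / 2) * Real.exp (-z ^ 2 / 2) := by
    intro z
    rw [hG]
    simp only
    congr 1
    · rw [add_comm]
    · congr 1
      rw [add_sub_cancel_right]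
      rw [mul_pow, hs2]
      field_simp
      ring
  have h3 : (∫ u, G u) = s * Jga x := by
    rw [Jga, ← hsdef]
    simp_rw [← h2]
    rw [h1, abs_of_pos (inv_pos.mpr hs), smul_eq_mul]
    field_simp
  rw [h3]
  have h4 : Real.sqrt (4 * π * x) = Real.sqrt (2 * π) * s := by
    rw [hsdef, ← Real.sqrt_mul (by positivity)]
    congr 1
    ring
  rw [h4]
  have hpi : (0:ℝ) < Real.sqrt (2 * π) := Real.sqrt_pos.mpr (by positivity)
  congr 1
  field_simp

lemma tanh_abs_le_one (y : ℝ) : |Real.tanh y| ≤ 1 := by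
  rw [abs_le]
  constructor
  · have := my_tanh_lt_one (-y)
    rw [Real.tanh_neg] at this
    linarith
  · exact (my_tanh_lt_one y).le

lemma my_continuous_tanh : Continuous Real.tanh := by
  have : Real.tanh = fun t => Real.sinh t / Real.cosh t :=
    funext fun t => Real.tanh_eq_sinh_div_cosh t
  rw [this]
  exact Real.continuous_sinh.div Real.continuous_cosh fun t => (Real.cosh_pos t).ne'

lemma integrable_Jga (x : ℝ) :
    Integrable (fun z : ℝ =>
      Real.tanh ((x + Real.sqrt (2 * x) * z) / 2) * Real.exp (-z ^ 2 / 2)) :=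
  integrable_bdd_gauss (my_continuous_tanh.comp (by continuity)) (fun z => tanh_abs_le_one _)

lemma Jga_nonneg {x : ℝ} (hx : 0 < x) : 0 ≤ Jga x := by
  set s := Real.sqrt (2 * x) with hs
  have hneg : Jga x = ∫ z : ℝ, Real.tanh ((x + s * (-z)) / 2) * Real.exp (-z ^ 2 / 2) := by
    rw [Jga]
    rw [← MeasureTheory.integral_neg_eq_self
      (fun z : ℝ => Real.tanh ((x + s * z) / 2) * Real.exp (-z ^ 2 / 2))]
    simp [neg_sq]
  have hint1 : Integrable (fun z : ℝ =>
      Real.tanh ((x + s * z) / 2) * Real.exp (-z ^ 2 / 2)) := integrable_Jga x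
  have hint2 : Integrable (fun z : ℝ =>
      Real.tanh ((x + s * (-z)) / 2) * Real.exp (-z ^ 2 / 2)) :=
    integrable_bdd_gauss (my_continuous_tanh.comp (by continuity)) (fun z => tanh_abs_le_one _)
  have key : 0 ≤ Jga x + Jga x := by
    nth_rewrite 2 [hneg]
    rw [Jga, ← MeasureTheory.integral_add hint1 hint2]
    apply MeasureTheory.integral_nonneg
    rw [Pi.le_def]
    intro z
    show (0:ℝ) ≤ _
    have hsum : 0 ≤ Real.tanh ((x + s * z) / 2) + Real.tanh ((x + s * (-z)) / 2) := by
      have : -((x + s * (-z)) / 2) < (x + s * z) / 2 := by linarith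
      have h := my_tanh_strictMono this
      rw [Real.tanh_neg] at h
      linarith
    have hg : 0 ≤ Real.exp (-z ^ 2 / 2) := (Real.exp_pos _).le
    nlinarith [mul_nonneg hsum hg]
  linarith

lemma Jga_lt {x : ℝ} (hx : 0 < x) : Jga x < Real.sqrt (2 * π) := by
  set s := Real.sqrt (2 * x) with hs
  have hpos : 0 < ∫ z : ℝ, (1 - Real.tanh ((x + s * z) / 2)) * Real.exp (-z ^ 2 / 2) := by
    have hint : Integrable (fun z : ℝ =>
        (1 - Real.tanh ((x + s * z) / 2)) * Real.exp (-z ^ 2 / 2)) :=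
      integrable_bdd_gauss (by
        exact continuous_const.sub (my_continuous_tanh.comp (by continuity)))
        (C := 2) (fun z => by
          have := tanh_abs_le_one ((x + s * z) / 2)
          rw [abs_le] at this ⊢
          constructor <;> linarith [this.1, this.2])
    rw [MeasureTheory.integral_pos_iff_support_of_nonneg]
    · have : Function.support (fun z : ℝ =>
          (1 - Real.tanh ((x + s * z) / 2)) * Real.exp (-z ^ 2 / 2)) = Set.univ := by
        ext z
        simp only [Function.mem_support, Set.mem_univ, iff_true]
        have h1 := my_tanh_lt_one ((x + s * z) / 2)
        exact (mul_pos (by linarith) (Real.exp_pos _)).ne'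
      rw [this]
      simp
    · intro z
      have h1 := my_tanh_lt_one ((x + s * z) / 2)
      have hg : 0 < Real.exp (-z ^ 2 / 2) := Real.exp_pos _
      exact (mul_pos (by linarith) hg).le
    · exact hint
  have hsub : (∫ z : ℝ, (1 - Real.tanh ((x + s * z) / 2)) * Real.exp (-z ^ 2 / 2))
      = Real.sqrt (2 * π) - Jga x := by
    simp_rw [sub_mul, one_mul]
    rw [MeasureTheory.integral_sub integrable_gauss (integrable_Jga x), integral_gauss]
    rfl
  linarith [hsub ▸ hpos]

noncomputable def DJga (x : ℝ) : ℝ :=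
  ∫ z : ℝ, ((1 + z * (Real.sqrt (2 * x))⁻¹) / 2) *
    (1 / Real.cosh ((x + Real.sqrt (2 * x) * z) / 2) ^ 2) * Real.exp (-z ^ 2 / 2)

lemma hasDerivAt_sqrt_two_mul {t : ℝ} (ht : 0 < t) :
    HasDerivAt (fun t : ℝ => Real.sqrt (2 * t)) ((Real.sqrt (2 * t))⁻¹) t := by
  have h2t : (2:ℝ) * t ≠ 0 := by positivity
  have hin : HasDerivAt (fun t : ℝ => 2 * t) 2 t := by
    simpa using (hasDerivAt_id t).const_mul (2:ℝ)
  have h := (Real.hasDerivAt_sqrt h2t).comp t hin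
  refine h.congr_deriv (Eq.symm ?_)
  have hs : Real.sqrt (2 * t) ≠ 0 := by positivity
  field_simp

lemma hasDerivAt_inner {z t : ℝ} (ht : 0 < t) :
    HasDerivAt (fun t : ℝ => (t + Real.sqrt (2 * t) * z) / 2)
      ((1 + z * (Real.sqrt (2 * t))⁻¹) / 2) t := by
  have h := ((hasDerivAt_id t).add ((hasDerivAt_sqrt_two_mul ht).mul_const z)).div_const 2
  refine h.congr_deriv (Eq.symm ?_)
  ring

lemma hasDerivAt_F {z t : ℝ} (ht : 0 < t) :
    HasDerivAt
      (fun t : ℝ => Real.tanh ((t + Real.sqrt (2 * t) * z) / 2) * Real.exp (-z ^ 2 / 2))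
      (((1 + z * (Real.sqrt (2 * t))⁻¹) / 2) *
        (1 / Real.cosh ((t + Real.sqrt (2 * t) * z) / 2) ^ 2) * Real.exp (-z ^ 2 / 2)) t := by
  have h := ((myHasDerivAt_tanh ((t + Real.sqrt (2 * t) * z) / 2)).comp t
    (hasDerivAt_inner ht)).mul_const (Real.exp (-z ^ 2 / 2))
  refine h.congr_deriv (Eq.symm ?_)
  ring

lemma hasDerivAt_Jga {x : ℝ} (hx : 0 < x) : HasDerivAt Jga (DJga x) x := by
  set F : ℝ → ℝ → ℝ := fun t z =>
    Real.tanh ((t + Real.sqrt (2 * t) * z) / 2) * Real.exp (-z ^ 2 / 2) with hF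
  set F' : ℝ → ℝ → ℝ := fun t z =>
    ((1 + z * (Real.sqrt (2 * t))⁻¹) / 2) *
      (1 / Real.cosh ((t + Real.sqrt (2 * t) * z) / 2) ^ 2) * Real.exp (-z ^ 2 / 2) with hF'
  have hε : (0:ℝ) < x / 2 := by linarith
  have hballpos : ∀ t ∈ ball x (x / 2), 0 < t := by
    intro t htb
    rw [mem_ball, Real.dist_eq, abs_lt] at htb
    linarith [htb.1]
  have hcont : ∀ t : ℝ, Continuous (F t) := by
    intro t
    apply Continuous.mul ?_ (by continuity)
    exact my_continuous_tanh.comp (by continuity)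
  have key := hasDerivAt_integral_of_dominated_loc_of_deriv_le (μ := volume)
    (F := F) (F' := F') (x₀ := x)
    (bound := fun z => ((1 + |z| * (Real.sqrt x)⁻¹) / 2) * Real.exp (-z ^ 2 / 2))
    (ball_mem_nhds x hε)
    (Eventually.of_forall fun t => (hcont t).aestronglyMeasurable)
    (integrable_Jga x)
    (by
      -- measurability of F' x
      apply Continuous.aestronglyMeasurable
      apply Continuous.mul ?_ (by continuity)
      apply Continuous.mul (by continuity)
      apply Continuous.div continuous_const
      · exact (Real.continuous_cosh.comp (by continuity)).pow 2
      · intro z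
        positivity)
    (Eventually.of_forall fun z => by
      -- bound
      intro t htb
      have ht : 0 < t := hballpos t htb
      have htx : x / 2 < t := by
        rw [mem_ball, Real.dist_eq, abs_lt] at htb
        linarith [htb.1]
      have hsx : (0:ℝ) < Real.sqrt x := Real.sqrt_pos.mpr hx
      have hst : (0:ℝ) < Real.sqrt (2 * t) := Real.sqrt_pos.mpr (by linarith)
      have hmono : (Real.sqrt (2 * t))⁻¹ ≤ (Real.sqrt x)⁻¹ := by
        apply inv_anti₀ hsx
        apply Real.sqrt_le_sqrt
        linarith
      have hcosh1 : (1:ℝ) ≤ Real.cosh ((t + Real.sqrt (2 * t) * z) / 2) := Real.one_le_cosh _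
      have hc2 : (1:ℝ) ≤ Real.cosh ((t + Real.sqrt (2 * t) * z) / 2) ^ 2 := by nlinarith
      have hgpos : (0:ℝ) < Real.exp (-z ^ 2 / 2) := Real.exp_pos _
      rw [hF']
      simp only [Real.norm_eq_abs]
      rw [abs_mul, abs_mul, abs_of_pos hgpos]
      have h1 : |(1 + z * (Real.sqrt (2 * t))⁻¹) / 2| ≤ (1 + |z| * (Real.sqrt x)⁻¹) / 2 := by
        rw [abs_div, abs_of_pos (by norm_num : (0:ℝ) < 2)]
        apply div_le_div_of_nonneg_right ?_ (by norm_num)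
        calc |1 + z * (Real.sqrt (2 * t))⁻¹| ≤ 1 + |z * (Real.sqrt (2 * t))⁻¹| := by
              have := abs_add_le (1:ℝ) (z * (Real.sqrt (2 * t))⁻¹)
              simpa using this
          _ = 1 + |z| * (Real.sqrt (2 * t))⁻¹ := by
              rw [abs_mul, abs_of_pos (inv_pos.mpr hst)]
          _ ≤ 1 + |z| * (Real.sqrt x)⁻¹ := by
              have := mul_le_mul_of_nonneg_left hmono (abs_nonneg z)
              linarith
      have h2 : |1 / Real.cosh ((t + Real.sqrt (2 * t) * z) / 2) ^ 2| ≤ 1 := by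
        rw [abs_div, abs_of_pos (by positivity : (0:ℝ) < Real.cosh ((t + Real.sqrt (2 * t) * z) / 2) ^ 2)]
        rw [abs_one, div_le_one (by positivity)]
        exact hc2
      calc |(1 + z * (Real.sqrt (2 * t))⁻¹) / 2| *
            |1 / Real.cosh ((t + Real.sqrt (2 * t) * z) / 2) ^ 2| * Real.exp (-z ^ 2 / 2)
          ≤ ((1 + |z| * (Real.sqrt x)⁻¹) / 2) * 1 * Real.exp (-z ^ 2 / 2) := by
            apply mul_le_mul_of_nonneg_right ?_ hgpos.le
            exact mul_le_mul h1 h2 (abs_nonneg _) (by positivity)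
        _ = ((1 + |z| * (Real.sqrt x)⁻¹) / 2) * Real.exp (-z ^ 2 / 2) := by ring)
    (by
      -- bound integrable
      have h1 := integrable_gauss.const_mul (1/2 : ℝ)
      have h2 := integrable_abs_mul_gauss.const_mul ((Real.sqrt x)⁻¹ / 2)
      have h := h1.add h2
      apply h.congr
      apply Eventually.of_forall
      intro z
      simp only [Pi.add_apply]
      ring)
    (Eventually.of_forall fun z => by
      intro t htb
      exact hasDerivAt_F (hballpos t htb))
  exact key.2

lemma DJga_pos {x : ℝ} (hx : 0 < x) : 0 < DJga x := by
  have h2x : (0:ℝ) < 2 * x := by linarith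
  set s := Real.sqrt (2 * x) with hsdef
  have hs : 0 < s := Real.sqrt_pos.mpr h2x
  set w : ℝ → ℝ := fun z => (x + s * z) / 2 with hw
  have hwderiv : ∀ z : ℝ, HasDerivAt w (s / 2) z := by
    intro z
    have h := (((hasDerivAt_id z).const_mul s).const_add x).div_const 2
    refine h.congr_deriv (Eq.symm ?_)
    ring
  set u : ℝ → ℝ := fun z => 1 / Real.cosh (w z) ^ 2 with hu
  set u' : ℝ → ℝ := fun z => -(s * Real.sinh (w z)) / Real.cosh (w z) ^ 3 with hu'
  set v : ℝ → ℝ := fun z => Real.exp (-z ^ 2 / 2) with hv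
  set v' : ℝ → ℝ := fun z => -z * Real.exp (-z ^ 2 / 2) with hv'
  have hcoshpos : ∀ z : ℝ, 0 < Real.cosh (w z) := fun z => Real.cosh_pos _
  have hcont_u : Continuous u := by
    apply Continuous.div continuous_const
    · exact (Real.continuous_cosh.comp (by continuity)).pow 2
    · intro z
      exact (pow_pos (hcoshpos z) 2).ne'
  have hud : ∀ z : ℝ, HasDerivAt u (u' z) z := by
    intro z
    have hcosh : HasDerivAt (fun z => Real.cosh (w z)) (Real.sinh (w z) * (s / 2)) z :=
      (Real.hasDerivAt_cosh (w z)).comp z (hwderiv z)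
    have hc2 : HasDerivAt (fun z => Real.cosh (w z) ^ 2)
        (2 * Real.cosh (w z) ^ 1 * (Real.sinh (w z) * (s / 2))) z := by
      simpa using hcosh.fun_pow 2
    have h := (hasDerivAt_const z (1:ℝ)).div hc2 (pow_ne_zero 2 (hcoshpos z).ne')
    refine h.congr_deriv (Eq.symm ?_)
    rw [hu']
    have hc := (hcoshpos z).ne'
    field_simp
    ring
  have hvd : ∀ z : ℝ, HasDerivAt v (v' z) z := by
    intro z
    have hinner : HasDerivAt (fun z : ℝ => -z ^ 2 / 2) (-(2 * z ^ 1) / 2) z :=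
      ((hasDerivAt_pow 2 z).neg).div_const 2
    have h := hinner.exp
    refine h.congr_deriv (Eq.symm ?_)
    rw [hv']
    ring
  -- integrability facts
  have hmeas_u'v : AEStronglyMeasurable (u' * v) volume := by
    apply Continuous.aestronglyMeasurable
    apply Continuous.mul ?_ (by continuity)
    apply Continuous.div
    · exact (continuous_const.mul (Real.continuous_sinh.comp (by continuity))).neg
    · exact (Real.continuous_cosh.comp (by continuity)).pow 3
    · intro z
      exact (pow_pos (hcoshpos z) 3).ne'
  have habs_u : ∀ z, |u z| ≤ 1 := by
    intro z
    rw [hu]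
    have h1 : (1:ℝ) ≤ Real.cosh (w z) := Real.one_le_cosh _
    rw [abs_of_pos (by positivity)]
    rw [div_le_one (by positivity)]
    nlinarith
  have habs_u' : ∀ z, |u' z| ≤ s := by
    intro z
    rw [hu']
    have h1 : (1:ℝ) ≤ Real.cosh (w z) := Real.one_le_cosh _
    have h2 : |Real.sinh (w z)| ≤ Real.cosh (w z) := by
      rw [abs_le]
      constructor
      · nlinarith [Real.cosh_sub_sinh (w z), Real.exp_pos (-(w z)), Real.sinh_neg (w z),
          Real.cosh_neg (w z), Real.cosh_add_sinh (w z), Real.exp_pos (w z)]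
      · nlinarith [Real.cosh_sub_sinh (w z), Real.exp_pos (-(w z))]
    rw [abs_div, abs_neg, abs_mul, abs_of_pos hs, abs_of_pos (by positivity : (0:ℝ) < Real.cosh (w z) ^ 3)]
    rw [div_le_iff₀ (by positivity)]
    have h3 : Real.cosh (w z) ≤ Real.cosh (w z) ^ 3 := by
      nlinarith [mul_nonneg (mul_nonneg (sub_nonneg.mpr h1) (hcoshpos z).le)
        (by linarith : (0:ℝ) ≤ Real.cosh (w z) + 1)]
    have h4 : |Real.sinh (w z)| ≤ Real.cosh (w z) ^ 3 := le_trans h2 h3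
    calc s * |Real.sinh (w z)| ≤ s * Real.cosh (w z) ^ 3 :=
          mul_le_mul_of_nonneg_left h4 hs.le
      _ = s * Real.cosh (w z) ^ 3 := rfl
  have hint_uv' : Integrable (u * v') := by
    apply Integrable.mono integrable_abs_mul_gauss
    · exact (hcont_u.mul (by continuity)).aestronglyMeasurable
    · apply Eventually.of_forall
      intro z
      simp only [Pi.mul_apply, Real.norm_eq_abs, hv']
      rw [abs_mul, abs_mul, abs_neg, abs_of_pos (Real.exp_pos _),
        abs_of_nonneg (by positivity : (0:ℝ) ≤ |z| * Real.exp (-z ^ 2 / 2))]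
      calc |u z| * (|z| * Real.exp (-z ^ 2 / 2)) ≤ 1 * (|z| * Real.exp (-z ^ 2 / 2)) := by
            apply mul_le_mul_of_nonneg_right (habs_u z) (by positivity)
        _ = |z| * Real.exp (-z ^ 2 / 2) := by ring
  have hint_u'v : Integrable (u' * v) := by
    apply Integrable.mono (integrable_gauss.const_mul s)
    · exact hmeas_u'v
    · apply Eventually.of_forall
      intro z
      simp only [Pi.mul_apply, Real.norm_eq_abs, hv]
      rw [abs_mul, abs_of_pos (Real.exp_pos _),
        abs_of_nonneg (by positivity : (0:ℝ) ≤ s * Real.exp (-z ^ 2 / 2))]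
      exact mul_le_mul_of_nonneg_right (habs_u' z) (Real.exp_pos _).le
  have hint_uv : Integrable (u * v) := by
    have := integrable_bdd_gauss hcont_u habs_u
    apply this.congr
    apply Eventually.of_forall
    intro z
    rfl
  -- Stein identity
  have stein := integral_mul_deriv_eq_deriv_mul_of_integrable (fun z _ => hud z) (fun z _ => hvd z) hint_uv' hint_u'v hint_uv
  -- rewrite both sides
  have hBint : Integrable (fun z : ℝ => z * u z * Real.exp (-z ^ 2 / 2)) := by
    have := hint_uv'.neg
    apply this.congr
    apply Eventually.of_forall
    intro z
    simp only [Pi.mul_apply, Pi.neg_apply, hv']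
    ring
  have hLHS : (∫ z : ℝ, u z * v' z) = -∫ z : ℝ, z * u z * Real.exp (-z ^ 2 / 2) := by
    rw [← MeasureTheory.integral_neg]
    apply integral_congr_ae
    apply Eventually.of_forall
    intro z
    simp only [hv']
    ring
  have hCint : Integrable (fun z : ℝ =>
      (Real.sinh (w z) / Real.cosh (w z) ^ 3) * Real.exp (-z ^ 2 / 2)) := by
    have := hint_u'v.neg
    apply (this.const_mul s⁻¹).congr
    apply Eventually.of_forall
    intro z
    simp only [Pi.mul_apply, Pi.neg_apply, hu', hv]
    field_simp
  have hRHS : (∫ z : ℝ, u' z * v z)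
      = -(s * ∫ z : ℝ, (Real.sinh (w z) / Real.cosh (w z) ^ 3) * Real.exp (-z ^ 2 / 2)) := by
    rw [← MeasureTheory.integral_const_mul, ← MeasureTheory.integral_neg]
    apply integral_congr_ae
    apply Eventually.of_forall
    intro z
    simp only [hu', hv]
    field_simp
  -- B = ∫ z * u * gauss = -s * C
  have hB : (∫ z : ℝ, z * u z * Real.exp (-z ^ 2 / 2))
      = -(s * ∫ z : ℝ, (Real.sinh (w z) / Real.cosh (w z) ^ 3) * Real.exp (-z ^ 2 / 2)) := by
    rw [hLHS] at stein
    rw [← hRHS]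
    linarith [stein]
  -- decompose DJga
  have hint_ug : Integrable (fun z : ℝ => u z * Real.exp (-z ^ 2 / 2)) :=
    integrable_bdd_gauss hcont_u habs_u
  have hDJ : DJga x = (1/2) * (∫ z : ℝ, u z * Real.exp (-z ^ 2 / 2))
      + (1/(2*s)) * (∫ z : ℝ, z * u z * Real.exp (-z ^ 2 / 2)) := by
    rw [DJga, ← MeasureTheory.integral_const_mul, ← MeasureTheory.integral_const_mul,
      ← MeasureTheory.integral_add (hint_ug.const_mul (1/2)) (hBint.const_mul (1/(2*s)))]
    apply integral_congr_ae
    apply Eventually.of_forall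
    intro z
    rw [← hsdef]
    simp only [hu, hw]
    field_simp
  -- positivity of A - C
  have hAC : 0 < (∫ z : ℝ, u z * Real.exp (-z ^ 2 / 2))
      - ∫ z : ℝ, (Real.sinh (w z) / Real.cosh (w z) ^ 3) * Real.exp (-z ^ 2 / 2) := by
    rw [← MeasureTheory.integral_sub hint_ug hCint]
    have hptpos : ∀ z : ℝ, 0 < u z * Real.exp (-z ^ 2 / 2)
        - (Real.sinh (w z) / Real.cosh (w z) ^ 3) * Real.exp (-z ^ 2 / 2) := by
      intro z
      have hc := hcoshpos z
      have htanh := my_tanh_lt_one (w z)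
      rw [Real.tanh_eq_sinh_div_cosh, div_lt_one hc] at htanh
      have key : u z - Real.sinh (w z) / Real.cosh (w z) ^ 3
          = (Real.cosh (w z) - Real.sinh (w z)) / Real.cosh (w z) ^ 3 := by
        rw [hu, sub_div]
        congr 1
        rw [div_eq_div_iff (by positivity) (by positivity)]
        ring
      have hgpos : (0:ℝ) < Real.exp (-z ^ 2 / 2) := Real.exp_pos _
      have : 0 < u z - Real.sinh (w z) / Real.cosh (w z) ^ 3 := by
        rw [key]
        apply div_pos (by linarith) (by positivity)
      nlinarith
    rw [MeasureTheory.integral_pos_iff_support_of_nonneg]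
    · have hsupp : Function.support (fun z : ℝ => u z * Real.exp (-z ^ 2 / 2)
          - (Real.sinh (w z) / Real.cosh (w z) ^ 3) * Real.exp (-z ^ 2 / 2)) = Set.univ := by
        ext z
        simp only [Function.mem_support, Set.mem_univ, iff_true]
        exact (hptpos z).ne'
      rw [hsupp]
      simp
    · intro z
      exact (hptpos z).le
    · exact hint_ug.sub hCint
  -- conclude
  rw [hDJ, hB]
  have hfinal : (1/2) * (∫ z : ℝ, u z * Real.exp (-z ^ 2 / 2))
      + (1/(2*s)) * -(s * ∫ z : ℝ, (Real.sinh (w z) / Real.cosh (w z) ^ 3) * Real.exp (-z ^ 2 / 2))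
      = (1/2) * ((∫ z : ℝ, u z * Real.exp (-z ^ 2 / 2))
        - ∫ z : ℝ, (Real.sinh (w z) / Real.cosh (w z) ^ 3) * Real.exp (-z ^ 2 / 2)) := by
    field_simp
    ring
  rw [hfinal]
  linarith

lemma Jga_strictMonoOn : StrictMonoOn Jga (Set.Ioi (0:ℝ)) := by
  apply strictMonoOn_of_deriv_pos (convex_Ioi 0)
  · intro t ht
    exact (hasDerivAt_Jga (Set.mem_Ioi.mp ht)).continuousAt.continuousWithinAt
  · intro t ht
    rw [interior_Ioi] at ht
    rw [(hasDerivAt_Jga (Set.mem_Ioi.mp ht)).deriv]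
    exact DJga_pos (Set.mem_Ioi.mp ht)

/-- `φ` takes values in `(0,1]` for `x ≥ 0` and is strictly decreasing on `(0,∞)`. -/
theorem phiGA_range_and_strictAnti :
    (∀ x : ℝ, 0 ≤ x → phiGA x ∈ Set.Ioc (0:ℝ) 1) ∧
      StrictAntiOn phiGA (Set.Ioi (0:ℝ)) := by
  have hpi : (0:ℝ) < Real.sqrt (2 * π) := Real.sqrt_pos.mpr (by positivity)
  constructor
  · intro x hx
    rcases eq_or_lt_of_le hx with h | h
    · have h0 : phiGA 0 = 1 := by rw [phiGA]; simp
      rw [← h, h0]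
      exact ⟨one_pos, le_refl 1⟩
    · have he := phiGA_eq h
      have h0 := Jga_nonneg h
      have h1 := Jga_lt h
      constructor
      · rw [he]
        have hlt : (Real.sqrt (2 * π))⁻¹ * Jga x < 1 := by
          rw [← inv_mul_cancel₀ hpi.ne']
          exact mul_lt_mul_of_pos_left h1 (inv_pos.mpr hpi)
        linarith
      · rw [he]
        nlinarith [mul_nonneg (inv_pos.mpr hpi).le h0]
  · intro a ha b hb hab
    rw [phiGA_eq (Set.mem_Ioi.mp ha), phiGA_eq (Set.mem_Ioi.mp hb)]
    have hJ := Jga_strictMonoOn ha hb hab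
    nlinarith [mul_lt_mul_of_pos_left hJ (inv_pos.mpr hpi)]
end
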